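/- (Bretagnolle–Huber inequality.) Let P and Q be probability distributions on a finite set X with the support of P contained in the support of Q. Then d_TV(P, Q) ≤ √(1 − exp(−D(P‖Q))). -/

import Mathlib

open BigOperators

noncomputable section

/-- The total variation distance `d_TV(P,Q) = (1/2) Σ_x |P(x) − Q(x)|` of finitely supported
distributions. -/
def tvDist {X : Type} [Fintype X] (P Q : X → ℝ) : ℝ :=
  (1 / 2) * ∑ x, |P x - Q x|

/-- The Kullback–Leibler divergence `D(P‖Q) = Σ_{x : P(x) > 0} P(x) log(P(x)/Q(x))`
(natural logarithm) of finitely supported distributions. -/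
def klDiv {X : Type} [Fintype X] (P Q : X → ℝ) : ℝ :=
  ∑ x ∈ Finset.univ.filter (fun x => 0 < P x), P x * Real.log (P x / Q x)

/-!
Write `T = d_TV(P, Q)`. Since `min + max = P + Q` and `max - min = |P - Q|`, the masses of
`min(P, Q)` and `max(P, Q)` are `1 - T` and `1 + T`. On the support `S` of `P` we have
`min · max = P Q`, so `-D(P‖Q) = Σ_S P log(min/P) + Σ_S P log(max/P)`, and Jensen's inequality
for `exp` bounds the exponential of each sum by the mass of `min`, resp. `max`. Hence
`exp(-D(P‖Q)) ≤ (1 - T)(1 + T) = 1 - T²`.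
-/

open Finset Real

lemma exp_sum_mul_log_div_le {ι : Type*} (s : Finset ι) (w f : ι → ℝ)
    (hw : ∀ i ∈ s, 0 < w i) (hw1 : ∑ i ∈ s, w i = 1) (hf : ∀ i ∈ s, 0 < f i) :
    exp (∑ i ∈ s, w i * log (f i / w i)) ≤ ∑ i ∈ s, f i := by
  have jensen := convexOn_exp.map_sum_le (t := s) (p := fun i => log (f i / w i))
    (fun i hi => (hw i hi).le) hw1 (fun _ _ => Set.mem_univ _)
  simp only [smul_eq_mul] at jensen
  refine jensen.trans_eq (sum_congr rfl fun i hi => ?_)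
  rw [exp_log (div_pos (hf i hi) (hw i hi))]
  field_simp [(hw i hi).ne']

lemma log_min_div_add_log_max_div {a b : ℝ} (ha : 0 < a) (hb : 0 < b) :
    log (min a b / a) + log (max a b / a) = -log (a / b) := by
  rw [← log_mul (div_pos (lt_min ha hb) ha).ne' (div_pos (ha.trans_le (le_max_left a b)) ha).ne',
    div_mul_div_comm, min_mul_max, mul_div_mul_left _ _ ha.ne', ← log_inv, inv_div]

section Distributions

variable {X : Type} [Fintype X] {P Q : X → ℝ}

lemma tvDist_nonneg (P Q : X → ℝ) : 0 ≤ tvDist P Q :=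
  mul_nonneg (by norm_num) (sum_nonneg fun _ _ => abs_nonneg _)

lemma sum_min_add_sum_max (hPsum : ∑ x, P x = 1) (hQsum : ∑ x, Q x = 1) :
    ∑ x, min (P x) (Q x) + ∑ x, max (P x) (Q x) = 2 := by
  rw [← sum_add_distrib]
  simp only [min_add_max, sum_add_distrib, hPsum, hQsum]
  norm_num

lemma sum_max_sub_sum_min (P Q : X → ℝ) :
    ∑ x, max (P x) (Q x) - ∑ x, min (P x) (Q x) = 2 * tvDist P Q := by
  rw [← sum_sub_distrib, tvDist]
  simp only [max_sub_min_eq_abs, abs_sub_comm (Q _)]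
  ring

lemma sum_min_eq_one_sub_tvDist (hPsum : ∑ x, P x = 1) (hQsum : ∑ x, Q x = 1) :
    ∑ x, min (P x) (Q x) = 1 - tvDist P Q := by
  linarith [sum_min_add_sum_max hPsum hQsum, sum_max_sub_sum_min P Q]

lemma sum_max_eq_one_add_tvDist (hPsum : ∑ x, P x = 1) (hQsum : ∑ x, Q x = 1) :
    ∑ x, max (P x) (Q x) = 1 + tvDist P Q := by
  linarith [sum_min_add_sum_max hPsum hQsum, sum_max_sub_sum_min P Q]

lemma neg_klDiv_eq (hsupp : ∀ x, 0 < P x → 0 < Q x) :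
    -klDiv P Q = ∑ x ∈ univ.filter (fun x => 0 < P x), P x * log (min (P x) (Q x) / P x)
      + ∑ x ∈ univ.filter (fun x => 0 < P x), P x * log (max (P x) (Q x) / P x) := by
  rw [klDiv, ← sum_neg_distrib, ← sum_add_distrib]
  refine sum_congr rfl fun x hx => ?_
  have hPx : 0 < P x := (mem_filter.mp hx).2
  rw [← mul_add, log_min_div_add_log_max_div hPx (hsupp x hPx), mul_neg]

lemma exp_neg_klDiv_le (hP : ∀ x, 0 ≤ P x) (hPsum : ∑ x, P x = 1)
    (hQ : ∀ x, 0 ≤ Q x) (hQsum : ∑ x, Q x = 1) (hsupp : ∀ x, 0 < P x → 0 < Q x) :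
    exp (-klDiv P Q) ≤ (1 - tvDist P Q) * (1 + tvDist P Q) := by
  set S := univ.filter (fun x => 0 < P x)
  have hPS : ∀ x ∈ S, 0 < P x := fun x hx => (mem_filter.mp hx).2
  have hS1 : ∑ x ∈ S, P x = 1 :=
    (sum_filter_of_ne fun x _ hx => (hP x).lt_of_ne' hx).trans hPsum
  have hmin : exp (∑ x ∈ S, P x * log (min (P x) (Q x) / P x)) ≤ 1 - tvDist P Q :=
    calc _ ≤ ∑ x ∈ S, min (P x) (Q x) :=
          exp_sum_mul_log_div_le S P _ hPS hS1 fun x hx => lt_min (hPS x hx) (hsupp x (hPS x hx))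
      _ ≤ ∑ x, min (P x) (Q x) := sum_le_univ_sum_of_nonneg fun x => le_min (hP x) (hQ x)
      _ = 1 - tvDist P Q := sum_min_eq_one_sub_tvDist hPsum hQsum
  have hmax : exp (∑ x ∈ S, P x * log (max (P x) (Q x) / P x)) ≤ 1 + tvDist P Q :=
    calc _ ≤ ∑ x ∈ S, max (P x) (Q x) :=
          exp_sum_mul_log_div_le S P _ hPS hS1 fun x hx => (hPS x hx).trans_le (le_max_left _ _)
      _ ≤ ∑ x, max (P x) (Q x) := sum_le_univ_sum_of_nonneg fun x => (hP x).trans (le_max_left _ _)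
      _ = 1 + tvDist P Q := sum_max_eq_one_add_tvDist hPsum hQsum
  rw [neg_klDiv_eq hsupp, exp_add]
  exact mul_le_mul hmin hmax (exp_pos _).le ((exp_pos _).le.trans hmin)

end Distributions

/-- Bretagnolle–Huber inequality:
`d_TV(P,Q) ≤ √(1 − exp(−D(P‖Q)))`. -/
theorem bretagnolle_huber {X : Type} [Fintype X]
    (P Q : X → ℝ)
    (hP : ∀ x, 0 ≤ P x) (hPsum : ∑ x, P x = 1)
    (hQ : ∀ x, 0 ≤ Q x) (hQsum : ∑ x, Q x = 1)
    (hsupp : ∀ x, 0 < P x → 0 < Q x) :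
    tvDist P Q ≤ Real.sqrt (1 - Real.exp (-klDiv P Q)) := by
  have hkey := exp_neg_klDiv_le hP hPsum hQ hQsum hsupp
  exact Real.le_sqrt_of_sq_le (by nlinarith)
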